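/- Let m be a positive integer. For every positive integer n with n > (L_{2m} + F_{2m}² + 1)³, if σ₂(n) − n² = L_{2m}·n + F_{2m}² + 1 (as integers), then either there exists an integer k ≥ 0 such that n = F_{2k} · F_{2k+2m} with both F_{2k} and F_{2k+2m} prime, or there exists an integer k with 0 ≤ k < m and m ≠ 2k such that n = F_{2k} · F_{2m−2k} with both F_{2k} and F_{2m−2k} prime. -/

import Mathlib

/-!
Write `L = L_{2m}` and `F = F_{2m}`, so that `L² = 5F² + 4`. Since `σ₂(n) - n²` is the sum of
the squares of the proper divisors of `n`, the hypothesis gives `q² ≤ (L + F²) n` for the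
largest proper divisor `q = n / p`; together with `n > (L + F² + 1)³` this forces `n = p q`
with primes `p < q`. Then `σ₂(n) = (1 + p²)(1 + q²)` turns the hypothesis into
`p² + q² = L p q + F²`, that is `(2q - L p)² = F² (5p² + 4)`. So `5p² + 4` is a square, which
by descent happens only for `p = F_{2t}`, with square root `L_{2t}`; as `q` is the larger root
of the quadratic, `2q = L F_{2t} + F L_{2t} = 2 F_{2t+2m}`.
-/

/-- The Lucas numbers: `L 0 = 2`, `L 1 = 1`, `L (n+2) = L (n+1) + L n`. -/
def lucasNum : ℕ → ℕ
  | 0 => 2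
  | 1 => 1
  | n + 2 => lucasNum (n + 1) + lucasNum n

namespace lucasNum

theorem add_two (n : ℕ) : lucasNum (n + 2) = lucasNum (n + 1) + lucasNum n := rfl

theorem add_fib (n : ℕ) : lucasNum n + Nat.fib n = 2 * Nat.fib (n + 1) := by
  induction n using Nat.twoStepInduction with
  | zero => rfl
  | one => rfl
  | more n ih₁ ih₂ =>
    rw [add_two, Nat.fib_add_two, Nat.fib_add_two (n := n + 1)]
    omega

theorem two_mul_succ (n : ℕ) : 2 * lucasNum (n + 1) = lucasNum n + 5 * Nat.fib n := by
  have h₀ := add_fib n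
  have h₁ : lucasNum (n + 1) + Nat.fib (n + 1) = 2 * Nat.fib (n + 2) := add_fib (n + 1)
  have := Nat.fib_add_two (n := n)
  omega

theorem sq_sub_five_mul_fib_sq (n : ℕ) :
    (lucasNum n : ℤ) ^ 2 - 5 * (Nat.fib n : ℤ) ^ 2 = 4 * (-1) ^ n := by
  induction n with
  | zero => norm_num [lucasNum]
  | succ n ih =>
    have hL : 2 * (lucasNum (n + 1) : ℤ) = lucasNum n + 5 * Nat.fib n := by
      exact_mod_cast two_mul_succ n
    have hF : 2 * (Nat.fib (n + 1) : ℤ) = lucasNum n + Nat.fib n := by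
      exact_mod_cast (add_fib n).symm
    have key : (2 * (lucasNum (n + 1) : ℤ)) ^ 2 - 5 * (2 * (Nat.fib (n + 1) : ℤ)) ^ 2 =
        -4 * ((lucasNum n : ℤ) ^ 2 - 5 * (Nat.fib n : ℤ) ^ 2) := by
      rw [hL, hF]; ring
    rw [pow_succ (-1 : ℤ)]
    refine mul_left_cancel₀ four_ne_zero ?_
    linear_combination key - 4 * ih

theorem two_mul_fib_add_two (n : ℕ) : 2 * Nat.fib (n + 2) = 3 * Nat.fib n + lucasNum n := by
  have := add_fib n
  have := Nat.fib_add_two (n := n)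
  omega

theorem two_mul_add_two (n : ℕ) : 2 * lucasNum (n + 2) = 5 * Nat.fib n + 3 * lucasNum n := by
  have h₀ := two_mul_succ n
  have h₁ : 2 * lucasNum (n + 2) = lucasNum (n + 1) + 5 * Nat.fib (n + 1) := two_mul_succ (n + 1)
  have := add_fib n
  omega

theorem two_mul_fib_add (a b : ℕ) :
    2 * Nat.fib (a + b) = lucasNum a * Nat.fib b + Nat.fib a * lucasNum b := by
  induction b using Nat.twoStepInduction with
  | zero => simp [lucasNum, mul_comm]
  | one => simpa [lucasNum] using (add_fib a).symm
  | more b ih₁ ih₂ =>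
    rw [← add_assoc, Nat.fib_add_two, Nat.fib_add_two, add_two]
    linear_combination ih₁ + ih₂

end lucasNum

theorem exists_descent_of_sq_eq_five_mul_sq_add_four {x c : ℕ} (hx : 2 ≤ x)
    (h : c ^ 2 = 5 * x ^ 2 + 4) :
    ∃ a b, a < x ∧ b ^ 2 = 5 * a ^ 2 + 4 ∧ 2 * x = 3 * a + b ∧ 2 * c = 5 * a + 3 * b := by
  have hc₂ : 2 * x < c := by nlinarith
  have hc₃ : c < 3 * x := by nlinarith
  have hpar : Even (c + x) := by
    have : Even (c ^ 2 + x ^ 2) := ⟨3 * x ^ 2 + 2, by omega⟩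
    simpa [Nat.even_add, Nat.even_pow] using this
  obtain ⟨k, hk⟩ := hpar
  obtain ⟨a, ha⟩ : ∃ a, 3 * x = c + 2 * a := ⟨(3 * x - c) / 2, by omega⟩
  obtain ⟨b, hb⟩ : ∃ b, 3 * c = 5 * x + 2 * b := ⟨(3 * c - 5 * x) / 2, by omega⟩
  refine ⟨a, b, by omega, by nlinarith, by omega, by omega⟩

theorem exists_eq_fib_lucasNum_of_sq_eq_five_mul_sq_add_four {x c : ℕ}
    (h : c ^ 2 = 5 * x ^ 2 + 4) : ∃ t, x = Nat.fib (2 * t) ∧ c = lucasNum (2 * t) := by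
  induction x using Nat.strong_induction_on generalizing c with
  | _ x ih =>
    match x, ih with
    | 0, _ =>
      obtain rfl : c = 2 := Nat.pow_left_injective two_ne_zero (by simpa using h)
      exact ⟨0, rfl, rfl⟩
    | 1, _ =>
      obtain rfl : c = 3 := Nat.pow_left_injective two_ne_zero (by simpa using h)
      exact ⟨1, rfl, rfl⟩
    | x + 2, ih =>
      obtain ⟨a, b, hax, hab, hx, hc⟩ :=
        exists_descent_of_sq_eq_five_mul_sq_add_four (by omega) h
      obtain ⟨t, rfl, rfl⟩ := ih a hax hab
      refine ⟨t + 1, ?_, ?_⟩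
      · have := lucasNum.two_mul_fib_add_two (2 * t); rw [mul_add, mul_one]; omega
      · have := lucasNum.two_mul_add_two (2 * t); rw [mul_add, mul_one]; omega

theorem exists_sq_eq_five_mul_sq_add_four_of_sq_add_sq_eq {L F p q : ℕ} (hF : 0 < F)
    (hpq : p ≤ q) (hL : L ^ 2 = 5 * F ^ 2 + 4) (h : p ^ 2 + q ^ 2 = L * p * q + F ^ 2) :
    ∃ e, e ^ 2 = 5 * p ^ 2 + 4 ∧ 2 * q = L * p + F * e := by
  zify at hF hpq hL h ⊢
  have hD : (2 * q - L * p : ℤ) ^ 2 = (F : ℤ) ^ 2 * (5 * p ^ 2 + 4) := by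
    linear_combination 4 * h + (p : ℤ) ^ 2 * hL
  -- `q` and `L p - q` are the roots of `X² - L p X + p² - F²`, whose product is `< p² ≤ q²`
  have hD_pos : 0 < (2 * q - L * p : ℤ) := by
    by_contra! hle
    have hq_le : (q : ℤ) ≤ L * p - q := by linarith
    nlinarith [mul_le_mul_of_nonneg_left hq_le (Int.natCast_nonneg q)]
  obtain ⟨e, he⟩ := (Int.pow_dvd_pow_iff two_ne_zero).mp ⟨_, hD⟩
  have he_pos : 0 < e := pos_of_mul_pos_right (he ▸ hD_pos) (by positivity)
  lift e to ℕ using he_pos.le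
  refine ⟨e, ?_, by linarith⟩
  rw [he, mul_pow] at hD
  exact_mod_cast mul_left_cancel₀ (by positivity) hD

open scoped ArithmeticFunction.sigma

namespace ArithmeticFunction

theorem sigma_two_prime {p : ℕ} (hp : p.Prime) : σ 2 p = 1 + p ^ 2 := by
  simpa [Finset.sum_range_succ] using sigma_apply_prime_pow (k := 2) (i := 1) hp

theorem sigma_two_prime_sq {p : ℕ} (hp : p.Prime) :
    σ 2 (p ^ 2) = 1 + p ^ 2 + p ^ 4 := by
  simp [sigma_apply_prime_pow hp, Finset.sum_range_succ]

theorem sigma_two_mul_primes {p q : ℕ} (hp : p.Prime) (hq : q.Prime)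
    (hpq : p ≠ q) : σ 2 (p * q) = (1 + p ^ 2) * (1 + q ^ 2) := by
  rw [isMultiplicative_sigma.map_mul_of_coprime ((Nat.coprime_primes hp hq).mpr hpq),
    sigma_two_prime hp, sigma_two_prime hq]

theorem one_add_sq_add_sq_le_sigma_two {n d : ℕ} (hd : d ∣ n) (hd₁ : 1 < d)
    (hdn : d < n) : 1 + d ^ 2 + n ^ 2 ≤ σ 2 n := by
  have hn : n ≠ 0 := by omega
  have hsub : ({1, d, n} : Finset ℕ) ⊆ n.divisors := by
    simp [Finset.insert_subset_iff, hd, hn]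
  calc 1 + d ^ 2 + n ^ 2 = ∑ i ∈ {1, d, n}, i ^ 2 := by
        rw [Finset.sum_insert (by simp; omega), Finset.sum_insert (by simp; omega)]
        simp [add_assoc]
    _ ≤ σ 2 n := sigma_apply (k := 2) ▸ Finset.sum_le_sum_of_subset hsub

end ArithmeticFunction

theorem mul_le_pow_three_of_sq_le {p q K : ℕ} (hp : 0 < p) (hpq : p ^ 2 ≤ q)
    (h : q ^ 2 ≤ K * (p * q)) : p * q ≤ K ^ 3 := by
  have hq : 0 < q := lt_of_lt_of_le (by positivity) hpq
  have hqK : q ≤ K * p := Nat.le_of_mul_le_mul_right (by nlinarith) hq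
  have hpK : p ≤ K := Nat.le_of_mul_le_mul_right (by nlinarith) hp
  calc p * q ≤ p * (K * p) := Nat.mul_le_mul_left p hqK
    _ ≤ K * (K * K) := by nlinarith [Nat.mul_le_mul hpK hpK]
    _ = K ^ 3 := by ring

open ArithmeticFunction

theorem exists_primes_eq_mul_of_sigma_two_bounds {n K : ℕ} (hK : K ^ 3 < n)
    (hlow : n ^ 2 + n + 1 < σ 2 n) (hup : σ 2 n ≤ n ^ 2 + K * n + 1) :
    ∃ p q, p.Prime ∧ q.Prime ∧ p < q ∧ n = p * q := by
  have hn : 1 < n := by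
    by_contra!
    interval_cases n <;> simp at hlow
  have hn_not_prime : ¬ n.Prime := fun h => by
    rw [sigma_two_prime h] at hlow; omega
  have hp : n.minFac.Prime := Nat.minFac_prime hn.ne'
  have hp_sq : n.minFac ^ 2 ≤ n := Nat.minFac_sq_le_self (by omega) hn_not_prime
  have hp_min : ∀ r, 2 ≤ r → r ∣ n → n.minFac ≤ r := fun _ => Nat.minFac_le_of_dvd
  obtain ⟨q, hnpq⟩ := Nat.minFac_dvd n
  generalize n.minFac = p at *
  subst hnpq
  have hp₂ := hp.two_le
  have hpq : p ≤ q := by nlinarith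
  have hq_sq : q ^ 2 ≤ K * (p * q) := by
    have := one_add_sq_add_sq_le_sigma_two (n := p * q) (Dvd.intro_left p rfl)
      (by nlinarith) (by nlinarith)
    omega
  have hq : q.Prime := by
    by_contra hq
    have hq_min : p ≤ q.minFac :=
      hp_min _ (Nat.minFac_prime (by omega)).two_le
        ((Nat.minFac_dvd q).trans (Dvd.intro_left p rfl))
    have hp_sq_le : p ^ 2 ≤ q :=
      (Nat.pow_le_pow_left hq_min 2).trans (Nat.minFac_sq_le_self (by omega) hq)
    have := mul_le_pow_three_of_sq_le hp.pos hp_sq_le hq_sq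
    omega
  refine ⟨p, q, hp, hq, hpq.lt_of_ne ?_, rfl⟩
  rintro rfl
  rw [← sq, sigma_two_prime_sq hp] at hlow
  nlinarith

theorem stmt_14_general (m : ℕ) (hm : 1 ≤ m) (n : ℕ)
    (hbig : (n : ℤ) > ((lucasNum (2 * m) : ℤ) + (Nat.fib (2 * m) : ℤ) ^ 2 + 1) ^ 3)
    (heq : ((ArithmeticFunction.sigma 2) n : ℤ) - (n : ℤ) ^ 2 =
      (lucasNum (2 * m) : ℤ) * n + (Nat.fib (2 * m) : ℤ) ^ 2 + 1) :
    (∃ k : ℕ, n = Nat.fib (2 * k) * Nat.fib (2 * k + 2 * m) ∧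
      (Nat.fib (2 * k)).Prime ∧ (Nat.fib (2 * k + 2 * m)).Prime) ∨
    (∃ k : ℕ, k < m ∧ m ≠ 2 * k ∧
      n = Nat.fib (2 * k) * Nat.fib (2 * m - 2 * k) ∧
      (Nat.fib (2 * k)).Prime ∧ (Nat.fib (2 * m - 2 * k)).Prime) := by
  set L := lucasNum (2 * m)
  set F := Nat.fib (2 * m)
  have hF : 0 < F := Nat.fib_pos.mpr (by omega)
  have hL : L ^ 2 = 5 * F ^ 2 + 4 := by
    have := lucasNum.sq_sub_five_mul_fib_sq (2 * m)
    rw [pow_mul, neg_one_sq, one_pow] at this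
    exact_mod_cast (by linarith : (L : ℤ) ^ 2 = 5 * F ^ 2 + 4)
  have hL_pos : 0 < L := by nlinarith
  have hσ : σ 2 n = n ^ 2 + L * n + F ^ 2 + 1 := by
    exact_mod_cast (by linarith : (σ 2 n : ℤ) = n ^ 2 + L * n + F ^ 2 + 1)
  have hn : (L + F ^ 2) ^ 3 < n := by
    have : (L + F ^ 2 + 1) ^ 3 < n := by exact_mod_cast hbig
    exact (Nat.pow_lt_pow_left (by omega) (by norm_num)).trans this
  have hn_pos : 1 ≤ n := by omega
  obtain ⟨p, q, hp, hq, hpq, rfl⟩ := exists_primes_eq_mul_of_sigma_two_bounds hn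
    (by rw [hσ]; nlinarith) (by rw [hσ]; nlinarith [Nat.mul_le_mul_left (F ^ 2) hn_pos])
  have hpq_eq : p ^ 2 + q ^ 2 = L * p * q + F ^ 2 := by
    rw [sigma_two_mul_primes hp hq hpq.ne] at hσ
    nlinarith
  obtain ⟨e, he, hq_eq⟩ := exists_sq_eq_five_mul_sq_add_four_of_sq_add_sq_eq hF hpq.le hL hpq_eq
  obtain ⟨t, rfl, rfl⟩ := exists_eq_fib_lucasNum_of_sq_eq_five_mul_sq_add_four he
  have hq_fib : q = Nat.fib (2 * t + 2 * m) := by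
    have := lucasNum.two_mul_fib_add (2 * m) (2 * t)
    rw [add_comm (2 * t)]
    linarith
  exact Or.inl ⟨t, by rw [hq_fib], hp, hq_fib ▸ hq⟩

theorem stmt_14 (m : ℕ) (hm : 1 ≤ m) (n : ℕ) (hn : 0 < n)
    (hbig : (n : ℤ) > ((lucasNum (2 * m) : ℤ) + (Nat.fib (2 * m) : ℤ) ^ 2 + 1) ^ 3)
    (heq : ((ArithmeticFunction.sigma 2) n : ℤ) - (n : ℤ) ^ 2 =
      (lucasNum (2 * m) : ℤ) * n + (Nat.fib (2 * m) : ℤ) ^ 2 + 1) :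
    (∃ k : ℕ, n = Nat.fib (2 * k) * Nat.fib (2 * k + 2 * m) ∧
      (Nat.fib (2 * k)).Prime ∧ (Nat.fib (2 * k + 2 * m)).Prime) ∨
    (∃ k : ℕ, k < m ∧ m ≠ 2 * k ∧
      n = Nat.fib (2 * k) * Nat.fib (2 * m - 2 * k) ∧
      (Nat.fib (2 * k)).Prime ∧ (Nat.fib (2 * m - 2 * k)).Prime) :=
  stmt_14_general m hm n hbig heq
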